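/- arXiv:0911.0723 — 4 statements merged into one kernel-verified Lean document; each statement's English description precedes it below -/
import Mathlib

section
/- Let x : ℝ → ℝ be infinitely differentiable with derivatives in L²(ℝ), and suppose there exist C > 0 and M > 0 such that (1/2)(‖d^{k−1}x/dt^{k−1}‖²_{L²} + ‖d^{k+1}x/dt^{k+1}‖²_{L²}) ≤ k! C^{−k} M for all odd k = 1, 3, 5, .... If x(t) = 0 for all t < 0, then x ≡ 0. -/
open MeasureTheory Real Filter

-- limit-zero lemma
theorem aux_lim_zero {h : ℝ → ℝ} {L : ℝ} (hint : Integrable h)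
    (hpos : ∀ t, 0 ≤ h t) (hlim : Tendsto h atTop (nhds L)) : L = 0 := by
  by_contra hL
  have hL0 : 0 ≤ L := ge_of_tendsto' hlim hpos
  have hLpos : 0 < L := lt_of_le_of_ne hL0 (Ne.symm hL)
  have hev : ∀ᶠ t in atTop, L / 2 ≤ h t :=
    hlim.eventually_const_le (by linarith)
  obtain ⟨a, ha⟩ := eventually_atTop.1 hev
  have hIci : IntegrableOn h (Set.Ici a) := hint.integrableOn
  have hconst : IntegrableOn (fun _ : ℝ => L / 2) (Set.Ici a) := by
    refine Integrable.mono' hIci aestronglyMeasurable_const ?_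
    filter_upwards [ae_restrict_mem measurableSet_Ici] with t ht
    have := ha t ht
    rw [Real.norm_eq_abs, abs_of_pos (by linarith : (0:ℝ) < L/2)]
    exact this
  rw [integrableOn_const_iff] at hconst
  rcases hconst with h1 | h2
  · have : L / 2 = 0 := enorm_eq_zero.1 h1
    linarith
  · simp [Real.volume_Ici] at h2

theorem aux_vanish {x : ℝ → ℝ} (hsmooth : ContDiff ℝ (⊤ : ℕ∞) x)
    (hzero : ∀ t < (0:ℝ), x t = 0) :
    ∀ k : ℕ, ∀ t : ℝ, t ≤ 0 → iteratedDeriv k x t = 0 := by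
  have hneg : ∀ k : ℕ, ∀ t : ℝ, t < 0 → iteratedDeriv k x t = 0 := by
    intro k
    induction k with
    | zero => simpa using hzero
    | succ n ih =>
      intro t ht
      rw [iteratedDeriv_succ]
      have hev : iteratedDeriv n x =ᶠ[nhds t] (fun _ => (0:ℝ)) := by
        filter_upwards [Iio_mem_nhds ht] with s hs
        exact ih s hs
      rw [hev.deriv_eq, deriv_const]
  intro k t ht
  rcases lt_or_eq_of_le ht with h | h
  · exact hneg k t h
  · subst h
    have hc : Continuous (iteratedDeriv k x) := hsmooth.continuous_iteratedDeriv k (by exact_mod_cast le_top)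
    have h1 : Tendsto (iteratedDeriv k x) (nhdsWithin 0 (Set.Iio 0)) (nhds (iteratedDeriv k x 0)) :=
      (hc.tendsto 0).mono_left nhdsWithin_le_nhds
    have h2 : Tendsto (iteratedDeriv k x) (nhdsWithin 0 (Set.Iio 0)) (nhds 0) := by
      apply Tendsto.congr' _ tendsto_const_nhds
      filter_upwards [self_mem_nhdsWithin] with s hs
      exact (hneg k s hs).symm
    exact tendsto_nhds_unique h1 h2


set_option maxHeartbeats 1000000 in
theorem identity_theorem_N (x : ℝ → ℝ) (C M : ℝ) (hC : 0 < C) (hM : 0 < M)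
    (hsmooth : ContDiff ℝ (⊤ : ℕ∞) x)
    (hint : ∀ k : ℕ, Integrable (fun t => (iteratedDeriv k x t) ^ 2))
    (hbd : ∀ k : ℕ, Odd k →
      (1 / 2) * ((∫ t : ℝ, (iteratedDeriv (k - 1) x t) ^ 2)
        + (∫ t : ℝ, (iteratedDeriv (k + 1) x t) ^ 2)) ≤ (k.factorial : ℝ) * C⁻¹ ^ k * M)
    (hzero : ∀ t < (0 : ℝ), x t = 0) :
    ∀ t : ℝ, x t = 0 := by
  set D : ℕ → ℝ → ℝ := fun k => iteratedDeriv k x with hD_def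
  set N : ℕ → ℝ := fun k => ∫ t : ℝ, (D k t) ^ 2 with hN_def
  -- basic facts
  have hcont : ∀ k, Continuous (D k) := fun k => hsmooth.continuous_iteratedDeriv k (by exact_mod_cast le_top)
  have hdiff : ∀ k, Differentiable ℝ (D k) := by
    intro k
    exact hsmooth.differentiable_iteratedDeriv k (by exact_mod_cast ENat.coe_lt_top k)
  have hDd : ∀ (k : ℕ) (s : ℝ), HasDerivAt (D k) (D (k+1) s) s := by
    intro k s
    have h1 := ((hdiff k) s).hasDerivAt
    have h2 : deriv (D k) = D (k+1) := (iteratedDeriv_succ).symm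
    rwa [h2] at h1
  have hvan : ∀ k, ∀ t : ℝ, t ≤ 0 → D k t = 0 := aux_vanish hsmooth hzero
  have hNpos : ∀ k, 0 ≤ N k := fun k => integral_nonneg (fun t => sq_nonneg _)
  have hprod : ∀ j k, Integrable (fun t => D j t * D k t) := by
    intro j k
    refine Integrable.mono' (((hint j).add (hint k)).const_mul (1/2))
      ((hcont j).mul (hcont k)).aestronglyMeasurable (Eventually.of_forall fun t => ?_)
    rw [Real.norm_eq_abs, abs_mul]
    simp only [Pi.add_apply]
    nlinarith [sq_nonneg (|D j t| - |D k t|), sq_abs (D j t), sq_abs (D k t),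
      abs_nonneg (D j t), abs_nonneg (D k t)]
  have habs : ∀ j k, (∫ t : ℝ, |D j t * D k t|) ≤ (1/2) * (N j + N k) := by
    intro j k
    have h1 : (∫ t : ℝ, |D j t * D k t|) ≤ ∫ t : ℝ, (1/2) * ((D j t)^2 + (D k t)^2) := by
      refine integral_mono (hprod j k).abs (((hint j).add (hint k)).const_mul _) fun t => ?_
      rw [abs_mul]
      nlinarith [sq_nonneg (|D j t| - |D k t|), sq_abs (D j t), sq_abs (D k t),
        abs_nonneg (D j t), abs_nonneg (D k t)]
    rwa [MeasureTheory.integral_const_mul, integral_add (hint j) (hint k)] at h1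
  have hsq : ∀ (k : ℕ) (t : ℝ), (D k t)^2 = ∫ s in (0:ℝ)..t, 2 * (D k s * D (k+1) s) := by
    intro k t
    have hderiv : ∀ s ∈ Set.uIcc (0:ℝ) t, HasDerivAt (fun u => (D k u)^2)
        (2 * (D k s * D (k+1) s)) s := by
      intro s _
      have h := (hDd k s).fun_pow 2
      simpa [mul_assoc] using h
    have hii : IntervalIntegrable (fun s => 2 * (D k s * D (k+1) s)) volume 0 t :=
      ((hprod k (k+1)).const_mul 2).intervalIntegrable
    rw [intervalIntegral.integral_eq_sub_of_hasDerivAt hderiv hii, hvan k 0 le_rfl]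
    ring
  have habs_int : ∀ (j k : ℕ) (t : ℝ), |∫ s in (0:ℝ)..t, 2 * (D j s * D k s)| ≤ N j + N k := by
    intro j k t
    calc |∫ s in (0:ℝ)..t, 2 * (D j s * D k s)|
        ≤ ∫ s in Set.uIoc 0 t, |2 * (D j s * D k s)| := by
          have h := intervalIntegral.norm_integral_le_integral_norm_uIoc
              (f := fun s => 2 * (D j s * D k s)) (a := 0) (b := t) (μ := volume)
          simpa only [Real.norm_eq_abs] using h
      _ ≤ ∫ s : ℝ, |2 * (D j s * D k s)| :=
          setIntegral_le_integral ((hprod j k).const_mul 2).abs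
            (Eventually.of_forall fun s => abs_nonneg _)
      _ = 2 * ∫ s : ℝ, |D j s * D k s| := by
          simp_rw [abs_mul, abs_two]
          exact MeasureTheory.integral_const_mul 2 _
      _ ≤ 2 * ((1/2) * (N j + N k)) := by
          have := habs j k; linarith
      _ = N j + N k := by ring
  have hpt : ∀ (k : ℕ) (t : ℝ), (D k t)^2 ≤ N k + N (k+1) := by
    intro k t
    rw [hsq k t]
    exact (le_abs_self _).trans (habs_int k (k+1) t)
  have hIoi_eq : ∀ (g : ℝ → ℝ), (∀ t ≤ (0:ℝ), g t = 0) →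
      (∫ t in Set.Ioi (0:ℝ), g t) = ∫ t : ℝ, g t := by
    intro g hg0
    exact setIntegral_eq_integral_of_forall_compl_eq_zero fun t ht => hg0 t (by simpa using ht)
  have hsqlim : ∀ k, Tendsto (fun T => (D k T)^2) atTop (nhds 0) := by
    intro k
    have hgi : IntegrableOn (fun s => 2 * (D k s * D (k+1) s)) (Set.Ioi 0) :=
      ((hprod k (k+1)).const_mul 2).integrableOn
    have h1 := intervalIntegral_tendsto_integral_Ioi 0 hgi tendsto_id
    have h2 : Tendsto (fun T => (D k T)^2) atTop
        (nhds (∫ s in Set.Ioi (0:ℝ), 2 * (D k s * D (k+1) s))) :=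
      h1.congr fun T => (hsq k T).symm
    have h3 := aux_lim_zero (hint k) (fun t => sq_nonneg _) h2
    rwa [h3] at h2
  have hprodlim : ∀ j k, Tendsto (fun T => D j T * D k T) atTop (nhds 0) := by
    intro j k
    refine squeeze_zero_norm (a := fun T => (1/2) * ((D j T)^2 + (D k T)^2)) (fun T => ?_) ?_
    · show ‖D j T * D k T‖ ≤ (1/2) * ((D j T)^2 + (D k T)^2)
      rw [Real.norm_eq_abs, abs_mul]
      nlinarith [sq_nonneg (|D j T| - |D k T|), sq_abs (D j T), sq_abs (D k T),
        abs_nonneg (D j T), abs_nonneg (D k T)]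
    · have := ((hsqlim j).add (hsqlim k)).const_mul (1/2 : ℝ)
      simpa using this
  have hinterp : ∀ k : ℕ, N (k+1) ≤ (1/2) * (N k + N (k+2)) := by
    intro k
    have hgd : ∀ s : ℝ, HasDerivAt (fun u => D k u * D (k+1) u)
        ((D (k+1) s)^2 + D k s * D (k+2) s) s := by
      intro s
      have h := (hDd k s).mul (hDd (k+1) s)
      exact h.congr_deriv (by ring)
    have hisum : Integrable (fun s => (D (k+1) s)^2 + D k s * D (k+2) s) :=
      (hint (k+1)).add (hprod k (k+2))
    have heq : ∀ T : ℝ, D k T * D (k+1) T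
        = ∫ s in (0:ℝ)..T, ((D (k+1) s)^2 + D k s * D (k+2) s) := by
      intro T
      rw [intervalIntegral.integral_eq_sub_of_hasDerivAt (fun s _ => hgd s)
        hisum.intervalIntegrable, hvan k 0 le_rfl]
      ring
    have h1 := intervalIntegral_tendsto_integral_Ioi 0 hisum.integrableOn tendsto_id
    have h2 : Tendsto (fun T => D k T * D (k+1) T) atTop
        (nhds (∫ s in Set.Ioi (0:ℝ), ((D (k+1) s)^2 + D k s * D (k+2) s))) :=
      h1.congr fun T => (heq T).symm
    have h3 : (∫ s in Set.Ioi (0:ℝ), ((D (k+1) s)^2 + D k s * D (k+2) s)) = 0 :=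
      tendsto_nhds_unique h2 (hprodlim k (k+1))
    have hsplit : (∫ s in Set.Ioi (0:ℝ), ((D (k+1) s)^2 + D k s * D (k+2) s))
        = N (k+1) + ∫ s : ℝ, D k s * D (k+2) s := by
      rw [integral_add ((hint (k+1)).integrableOn) ((hprod k (k+2)).integrableOn)]
      congr 1
      · refine hIoi_eq _ (fun s hs => ?_)
        have hv := hvan (k+1) s hs
        simp only [hD_def] at hv ⊢
        rw [hv]; ring
      · refine hIoi_eq _ (fun s hs => ?_)
        have hv := hvan k s hs
        simp only [hD_def] at hv ⊢
        rw [hv]; ring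
    have h4 : N (k+1) = - ∫ s : ℝ, D k s * D (k+2) s := by
      have h5 := hsplit.symm.trans h3
      linarith
    calc N (k+1) = - ∫ s : ℝ, D k s * D (k+2) s := h4
      _ ≤ |∫ s : ℝ, D k s * D (k+2) s| := neg_le_abs _
      _ ≤ ∫ s : ℝ, |D k s * D (k+2) s| := by
          have h6 := norm_integral_le_integral_norm (f := fun s => D k s * D (k+2) s) (μ := volume)
          simpa only [Real.norm_eq_abs] using h6
      _ ≤ (1/2) * (N k + N (k+2)) := habs k (k+2)
  -- quantitative bounds
  have hc : (0:ℝ) < C⁻¹ := inv_pos.2 hC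
  have hmaxpos : (0:ℝ) < max 1 C := lt_of_lt_of_le one_pos (le_max_left 1 C)
  have hodd_bd : ∀ k : ℕ, Odd k →
      N (k-1) ≤ 2 * ((k.factorial : ℝ) * C⁻¹^k * M)
      ∧ N (k+1) ≤ 2 * ((k.factorial : ℝ) * C⁻¹^k * M)
      ∧ N k ≤ (k.factorial : ℝ) * C⁻¹^k * M := by
    intro k hk
    have hb : (1/2) * (N (k-1) + N (k+1)) ≤ (k.factorial : ℝ) * C⁻¹^k * M := hbd k hk
    have hk1 : 1 ≤ k := hk.pos
    have e1 : k - 1 + 1 = k := by omega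
    have e2 : k - 1 + 2 = k + 1 := by omega
    have hi := hinterp (k-1)
    rw [e1, e2] at hi
    exact ⟨by linarith [hNpos (k+1)], by linarith [hNpos (k-1)], by linarith⟩
  have hNb : ∀ m : ℕ, N m ≤ (2 * max 1 C * M) * (((m+1).factorial : ℝ) * C⁻¹^(m+1)) := by
    intro m
    rcases Nat.even_or_odd m with he | ho
    · obtain ⟨j, hj⟩ := he
      have hodd : Odd (m+1) := by exact ⟨j, by omega⟩
      have h := (hodd_bd (m+1) hodd).1
      have e : m + 1 - 1 = m := by omega
      rw [e] at h
      have : (2:ℝ) * (((m+1).factorial : ℝ) * C⁻¹^(m+1) * M)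
          ≤ (2 * max 1 C * M) * (((m+1).factorial : ℝ) * C⁻¹^(m+1)) := by
        have h1 : (1:ℝ) ≤ max 1 C := le_max_left 1 C
        have h2 : (0:ℝ) ≤ ((m+1).factorial : ℝ) * C⁻¹^(m+1) := by positivity
        have h3 : (0:ℝ) ≤ (max 1 C - 1) * (((m+1).factorial : ℝ) * C⁻¹^(m+1)) * M :=
          mul_nonneg (mul_nonneg (sub_nonneg.2 h1) h2) hM.le
        nlinarith [h3]
      linarith
    · have h := (hodd_bd m ho).2.2
      have hCc : C * C⁻¹ = 1 := mul_inv_cancel₀ (ne_of_gt hC)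
      have h2 : ((m.factorial : ℝ)) * C⁻¹^m * M
          ≤ (2 * max 1 C * M) * (((m+1).factorial : ℝ) * C⁻¹^(m+1)) := by
        have hfac : ((m+1).factorial : ℝ) = (m+1) * m.factorial := by
          push_cast [Nat.factorial_succ]; ring
        have hm1 : (1:ℝ) ≤ (m+1 : ℝ) := by have := Nat.cast_nonneg (α := ℝ) m; linarith
        have hCmax : C ≤ max 1 C := le_max_right 1 C
        have hp : (0:ℝ) < C⁻¹^m := pow_pos hc m
        have hfp : (0:ℝ) < (m.factorial : ℝ) := by positivity
        rw [hfac, pow_succ]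
        have hu : (1:ℝ) ≤ max 1 C * C⁻¹ := by
          have := mul_le_mul_of_nonneg_right hCmax hc.le
          rwa [hCc] at this
        have hnn : (0:ℝ) ≤ (m.factorial : ℝ) * C⁻¹^m * M := by positivity
        have hone : (1:ℝ) ≤ 2*((m:ℝ)+1)*(max 1 C * C⁻¹) := by nlinarith [hu, hm1]
        calc (m.factorial : ℝ) * C⁻¹^m * M
            ≤ (2*((m:ℝ)+1)*(max 1 C * C⁻¹)) * ((m.factorial : ℝ) * C⁻¹^m * M) := by
              nlinarith [mul_le_mul_of_nonneg_right hone hnn]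
          _ = (2 * max 1 C * M) * (((m:ℝ)+1) * m.factorial * (C⁻¹^m * C⁻¹)) := by ring
      linarith
  -- pointwise bound on derivatives
  set K2 : ℝ := (2 * max 1 C * M) * (1 + C⁻¹) with hK2_def
  have hK2 : 0 < K2 := by
    rw [hK2_def]
    have h1 : (0:ℝ) < 2 * max 1 C * M := by positivity
    nlinarith [hc]
  have hptK : ∀ (m : ℕ) (s : ℝ), (D m s)^2 ≤ K2 * (((m+2).factorial : ℝ) * C⁻¹^(m+1)) := by
    intro m s
    have h1 := hpt m s
    have h2 := hNb m
    have h3 := hNb (m+1)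
    have hf : ((m+1).factorial : ℝ) ≤ ((m+2).factorial : ℝ) := by
      exact_mod_cast Nat.factorial_le (by omega)
    have e1 : m + 1 + 1 = m + 2 := by omega
    rw [e1] at h3
    have hKpos : (0:ℝ) < 2 * max 1 C * M := by positivity
    calc (D m s)^2 ≤ N m + N (m+1) := h1
      _ ≤ (2 * max 1 C * M) * (((m+1).factorial : ℝ) * C⁻¹^(m+1))
          + (2 * max 1 C * M) * (((m+2).factorial : ℝ) * C⁻¹^(m+2)) := add_le_add h2 h3
      _ ≤ K2 * (((m+2).factorial : ℝ) * C⁻¹^(m+1)) := by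
          have hps : C⁻¹^(m+2) = C⁻¹^(m+1) * C⁻¹ := pow_succ C⁻¹ (m+1)
          rw [hps, hK2_def]
          have hp : (0:ℝ) ≤ C⁻¹^(m+1) := (pow_pos hc _).le
          have hmul := mul_le_mul_of_nonneg_right hf hp
          nlinarith [hmul, hKpos, hc]
  -- iterated derivatives within Icc agree with global ones
  have hwithin : ∀ (n : ℕ) (b : ℝ), 0 < b →
      Set.EqOn (iteratedDerivWithin n x (Set.Icc 0 b)) (D n) (Set.Icc 0 b) := by
    intro n b hb
    induction n with
    | zero =>
      intro s hs
      rw [iteratedDerivWithin_zero]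
      simp only [hD_def, iteratedDeriv_zero]
    | succ n ih =>
      intro s hs
      have hu : UniqueDiffWithinAt ℝ (Set.Icc (0:ℝ) b) s := (uniqueDiffOn_Icc hb) s hs
      rw [iteratedDerivWithin_succ]
      have hcongr : derivWithin (iteratedDerivWithin n x (Set.Icc 0 b)) (Set.Icc 0 b) s
          = derivWithin (D n) (Set.Icc 0 b) s := derivWithin_congr ih (ih hs)
      rw [hcongr, ((hdiff n) s).derivWithin hu]
      simp only [hD_def, ← iteratedDeriv_succ]
  -- conclusion via Taylor's theorem
  intro t
  rcases le_or_gt t 0 with ht | ht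
  · have hv := hvan 0 t ht
    simp only [hD_def, iteratedDeriv_zero] at hv
    exact hv
  · have h0mem : (0:ℝ) ∈ Set.Icc (0:ℝ) t := Set.mem_Icc.2 ⟨le_refl _, ht.le⟩
    have taylor0 : ∀ n : ℕ, taylorWithinEval x n (Set.Icc 0 t) 0 t = 0 := by
      intro n
      rw [taylor_within_apply]
      apply Finset.sum_eq_zero
      intro k _
      rw [hwithin k t ht h0mem, hvan k 0 le_rfl, smul_zero]
    have key : ∀ n : ℕ, (x t)^2
        ≤ K2 * (((n+3).factorial : ℝ) * C⁻¹^(n+2)) * (t^(n+1) / ((n+1).factorial : ℝ))^2 := by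
      intro n
      have hf' : DifferentiableOn ℝ (iteratedDerivWithin n x (Set.Icc 0 t)) (Set.Ioo 0 t) :=
        ((hdiff n).differentiableOn).congr
          (fun s hs => hwithin n t ht (Set.Ioo_subset_Icc_self hs))
      obtain ⟨x', hx', hre⟩ := taylor_mean_remainder_lagrange (n := n) ht.ne
        (by rw [Set.uIcc_of_le ht.le]; exact (hsmooth.of_le (by exact_mod_cast le_top)).contDiffOn)
        (by rw [Set.uIcc_of_le ht.le, Set.uIoo_of_le ht.le]; exact hf')
      rw [Set.uIcc_of_le ht.le] at hre
      rw [Set.uIoo_of_le ht.le] at hx'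
      rw [taylor0 n, sub_zero, hwithin (n+1) t ht (Set.Ioo_subset_Icc_self hx'), sub_zero] at hre
      have h1 : (x t)^2 = (D (n+1) x')^2 * (t^(n+1) / ((n+1).factorial : ℝ))^2 := by
        rw [hre]
        rw [div_pow, mul_pow, div_pow]
        ring
      rw [h1]
      have h2 := hptK (n+1) x'
      have e1 : n + 1 + 2 = n + 3 := by omega
      have e2 : n + 1 + 1 = n + 2 := by omega
      rw [e1, e2] at h2
      exact mul_le_mul_of_nonneg_right h2 (sq_nonneg _)
    -- the upper bound tends to zero
    have hpoly : ∀ n : ℕ, ((n:ℝ)+2) * ((n:ℝ)+3) ≤ 2 * 4^(n+1) := by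
      intro n
      induction n with
      | zero => norm_num
      | succ k ih =>
        push_cast
        push_cast at ih
        have h4 : (0:ℝ) < 4^(k+1) := by positivity
        rw [pow_succ]
        nlinarith [ih, h4, Nat.cast_nonneg (α := ℝ) k]
    set r : ℝ := 4 * C⁻¹ * t^2 with hr_def
    have hrpos : 0 < r := by rw [hr_def]; positivity
    have key2 : ∀ n : ℕ, (x t)^2 ≤ (2*K2*C⁻¹) * (r^(n+1) / ((n+1).factorial : ℝ)) := by
      intro n
      have hF : (0:ℝ) < ((n+1).factorial : ℝ) := by
        exact_mod_cast Nat.factorial_pos (n+1)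
      have hfac3 : ((n+3).factorial : ℝ)
          = ((n:ℝ)+3) * (((n:ℝ)+2) * ((n+1).factorial : ℝ)) := by
        have : (n+3) = (n+2) + 1 := by omega
        rw [this, Nat.factorial_succ, show (n+2) = (n+1) + 1 from by omega, Nat.factorial_succ]
        push_cast
        ring
      have heq : K2 * (((n+3).factorial : ℝ) * C⁻¹^(n+2)) * (t^(n+1) / ((n+1).factorial : ℝ))^2
          = (K2 * C⁻¹^(n+2) * (((n:ℝ)+2) * ((n:ℝ)+3)) * (t^2)^(n+1)) / ((n+1).factorial : ℝ) := by
        rw [hfac3]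
        field_simp [hF.ne']
        ring
      have hmono : (K2 * C⁻¹^(n+2) * (((n:ℝ)+2) * ((n:ℝ)+3)) * (t^2)^(n+1))
          ≤ (K2 * C⁻¹^(n+2) * (2 * 4^(n+1)) * (t^2)^(n+1)) := by
        have h1 : (0:ℝ) ≤ K2 * C⁻¹^(n+2) := by positivity
        have h2 : (0:ℝ) ≤ (t^2)^(n+1) := by positivity
        exact mul_le_mul_of_nonneg_right (mul_le_mul_of_nonneg_left (hpoly n) h1) h2
      have hfinal : (K2 * C⁻¹^(n+2) * (2 * 4^(n+1)) * (t^2)^(n+1)) / ((n+1).factorial : ℝ)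
          = (2*K2*C⁻¹) * (r^(n+1) / ((n+1).factorial : ℝ)) := by
        rw [hr_def, mul_pow, mul_pow]
        ring
      calc (x t)^2 ≤ K2 * (((n+3).factorial : ℝ) * C⁻¹^(n+2))
            * (t^(n+1) / ((n+1).factorial : ℝ))^2 := key n
        _ = (K2 * C⁻¹^(n+2) * (((n:ℝ)+2) * ((n:ℝ)+3)) * (t^2)^(n+1))
            / ((n+1).factorial : ℝ) := heq
        _ ≤ (K2 * C⁻¹^(n+2) * (2 * 4^(n+1)) * (t^2)^(n+1)) / ((n+1).factorial : ℝ) := by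
            exact (div_le_div_iff_of_pos_right hF).2 hmono
        _ = (2*K2*C⁻¹) * (r^(n+1) / ((n+1).factorial : ℝ)) := hfinal
    have hlim : Tendsto (fun n : ℕ => (2*K2*C⁻¹) * (r^(n+1) / ((n+1).factorial : ℝ)))
        atTop (nhds 0) := by
      have h1 : Tendsto (fun n : ℕ => r^n / (n.factorial : ℝ)) atTop (nhds 0) :=
        FloorSemiring.tendsto_pow_div_factorial_atTop r
      have h2 : Tendsto (fun n : ℕ => r^(n+1) / ((n+1).factorial : ℝ)) atTop (nhds 0) :=
        h1.comp (tendsto_add_atTop_nat 1)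
      have h3 := h2.const_mul (2*K2*C⁻¹)
      simpa using h3
    have hle0 : (x t)^2 ≤ 0 := ge_of_tendsto' hlim key2
    have hsq0 : (x t)^2 = 0 := le_antisymm hle0 (sq_nonneg _)
    exact (pow_eq_zero_iff two_ne_zero).mp hsq0
end

section
/- Fix an integer N > 0 and let x : ℝ → ℝ be the L² function whose Fourier transform is X(iω) = (1 + iω)^{−N−1}. Then x(t) = 0 for all t ≤ 0, x is not identically zero, and ∫_{-∞}^{∞} |ω|^{2N} |X(iω)|² dω < ∞. -/
open MeasureTheory Real

/-! Since `‖1 + iω‖² = 1 + ω²` and `|ω|^{2N} ≤ (1 + ω²)^N`, the weighted spectrum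
`|ω|^{2N} |X(iω)|²` is dominated by the integrable function `(1 + ω²)⁻¹`. -/

lemma Complex.norm_one_add_I_mul_sq (ω : ℝ) : ‖1 + Complex.I * ω‖ ^ 2 = 1 + ω ^ 2 := by
  simp [Complex.sq_norm, Complex.normSq_apply]
  ring

lemma Complex.norm_one_add_I_mul_zpow_sq (ω : ℝ) (n : ℤ) :
    ‖(1 + Complex.I * ω) ^ n‖ ^ 2 = (1 + ω ^ 2) ^ n := by
  rw [norm_zpow, ← zpow_natCast, ← zpow_mul, mul_comm n, zpow_mul, zpow_natCast,
    Complex.norm_one_add_I_mul_sq]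

lemma abs_pow_two_mul_le_one_add_sq_pow (ω : ℝ) (N : ℕ) : |ω| ^ (2 * N) ≤ (1 + ω ^ 2) ^ N := by
  rw [pow_mul, sq_abs]
  exact pow_le_pow_left₀ (sq_nonneg ω) (le_add_of_nonneg_left zero_le_one) N

lemma abs_pow_two_mul_mul_one_add_sq_zpow_le (ω : ℝ) (N : ℕ) :
    |ω| ^ (2 * N) * (1 + ω ^ 2) ^ (-(N : ℤ) - 1) ≤ (1 + ω ^ 2)⁻¹ := by
  have hpos : 0 < 1 + ω ^ 2 := by positivity
  calc |ω| ^ (2 * N) * (1 + ω ^ 2) ^ (-(N : ℤ) - 1)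
      ≤ (1 + ω ^ 2) ^ N * (1 + ω ^ 2) ^ (-(N : ℤ) - 1) := by
        gcongr
        exact abs_pow_two_mul_le_one_add_sq_pow ω N
    _ = (1 + ω ^ 2)⁻¹ := by
        rw [← zpow_natCast, ← zpow_add₀ hpos.ne', ← zpow_neg_one]
        congr 1
        ring

lemma integrable_abs_pow_two_mul_mul_one_add_sq_zpow (N : ℕ) :
    Integrable fun ω : ℝ => |ω| ^ (2 * N) * (1 + ω ^ 2) ^ (-(N : ℤ) - 1) := by
  refine integrable_inv_one_add_sq.mono' ?_ (.of_forall fun ω => ?_)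
  · exact ((continuous_abs.pow _).mul
      ((by fun_prop : Continuous fun ω : ℝ => 1 + ω ^ 2).zpow₀ _
        fun ω => .inl (by positivity))).aestronglyMeasurable
  · rw [Real.norm_of_nonneg (by positivity)]
    exact abs_pow_two_mul_mul_one_add_sq_zpow_le ω N

lemma integrable_abs_pow_two_mul_mul_norm_one_add_I_mul_zpow_sq (N : ℕ) :
    Integrable fun ω : ℝ => |ω| ^ (2 * N) * ‖(1 + Complex.I * ω) ^ (-(N : ℤ) - 1)‖ ^ 2 := by
  simpa only [Complex.norm_one_add_I_mul_zpow_sq] using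
    integrable_abs_pow_two_mul_mul_one_add_sq_zpow N

theorem polynomial_decay_counterexample (N : ℕ) (hN : 0 < N) (x : ℝ → ℝ) (X : ℝ → ℂ)
    (hx : ∀ t : ℝ, x t = if 0 ≤ t then t ^ N * Real.exp (-t) / (N.factorial : ℝ) else 0)
    (hX : ∀ ω : ℝ, X ω = ((1 : ℂ) + Complex.I * ω) ^ (-(N : ℤ) - 1)) :
    (∀ t ≤ (0 : ℝ), x t = 0) ∧ (¬ ∀ t : ℝ, x t = 0) ∧
      Integrable (fun ω : ℝ => |ω| ^ (2 * N) * ‖X ω‖ ^ 2) := by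
  refine ⟨fun t ht => ?_, fun h => ?_, ?_⟩
  · rcases ht.lt_or_eq with ht | rfl
    · simp [hx, ht]
    · simp [hx, hN.ne']
  · have h1 := h 1
    simp only [hx, zero_le_one, if_true, one_pow, one_mul] at h1
    exact (div_pos (exp_pos _) (Nat.cast_pos.2 N.factorial_pos)).ne' h1
  · simpa only [hX] using integrable_abs_pow_two_mul_mul_norm_one_add_I_mul_zpow_sq N
end

section
/- Suppose X : ℝ → ℂ is measurable and there exist C, M > 0 with ∫ ω^{2k} |X(ω)|² dω ≤ C^k M for all even k ≥ 0. Then for every T with 4T² < 1/C, ∫ e^{2T|ω|} |X(ω)|² dω < ∞. -/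
open MeasureTheory Real

open Filter Topology

/-! If `∫ ω ^ (2k) |X ω|² ≤ C ^ k M` along infinitely many `k`, then by Markov's inequality the mass
of `|X|²` on `{R < |ω|}` is at most `M (C / R²) ^ k`, which tends to `0` once `|C| < R²`. So `|X|²`
vanishes almost everywhere outside `[-R, R]`, where the weight `exp (2T|ω|)` is bounded. -/

theorem mul_setIntegral_abs_gt_le_integral_pow_mul {μ : Measure ℝ} {f : ℝ → ℝ} (hf : 0 ≤ᵐ[μ] f)
    (hfi : Integrable f μ) {n : ℕ} (hmi : Integrable (fun ω ↦ ω ^ (2 * n) * f ω) μ) {R : ℝ}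
    (hR : 0 ≤ R) :
    R ^ (2 * n) * ∫ ω in {ω | R < |ω|}, f ω ∂μ ≤ ∫ ω, ω ^ (2 * n) * f ω ∂μ := by
  have hS : MeasurableSet {ω : ℝ | R < |ω|} := measurableSet_lt measurable_const measurable_abs
  rw [← integral_const_mul]
  calc ∫ ω in {ω | R < |ω|}, R ^ (2 * n) * f ω ∂μ
      ≤ ∫ ω in {ω | R < |ω|}, ω ^ (2 * n) * f ω ∂μ := by
        refine setIntegral_mono_on_ae (hfi.const_mul _).integrableOn hmi.integrableOn hS ?_
        filter_upwards [hf] with ω hω hωS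
        have : R ^ (2 * n) ≤ ω ^ (2 * n) := by
          rw [pow_mul, pow_mul, ← sq_abs ω]
          gcongr
        exact mul_le_mul_of_nonneg_right this hω
    _ ≤ ∫ ω, ω ^ (2 * n) * f ω ∂μ :=
        setIntegral_le_integral hmi
          (hf.mono fun ω hω ↦ mul_nonneg ((even_two_mul n).pow_nonneg ω) hω)

theorem ae_eq_zero_of_abs_gt_of_frequently_moment_le {μ : Measure ℝ} {f : ℝ → ℝ}
    (hf : 0 ≤ᵐ[μ] f) (hfi : Integrable f μ) {M r R : ℝ} (hR : 0 ≤ R) (hrR : |r| < R ^ 2)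
    (hmom : ∃ᶠ n in atTop, Integrable (fun ω ↦ ω ^ (2 * n) * f ω) μ ∧
      ∫ ω, ω ^ (2 * n) * f ω ∂μ ≤ M * r ^ n) :
    ∀ᵐ ω ∂μ, R < |ω| → f ω = 0 := by
  have hS : MeasurableSet {ω : ℝ | R < |ω|} := measurableSet_lt measurable_const measurable_abs
  have hR2 : 0 < R ^ 2 := (abs_nonneg r).trans_lt hrR
  have hratio : |r / R ^ 2| < 1 := by
    rwa [abs_div, abs_of_pos hR2, div_lt_one hR2]
  have hlim : Tendsto (fun n : ℕ ↦ M * (r / R ^ 2) ^ n) atTop (𝓝 0) := by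
    simpa using (tendsto_pow_atTop_nhds_zero_of_abs_lt_one hratio).const_mul M
  have htail : ∫ ω in {ω | R < |ω|}, f ω ∂μ ≤ 0 := by
    refine ge_of_tendsto_of_frequently hlim (hmom.mono fun n ⟨hmi, hn⟩ ↦ ?_)
    have hpos : 0 < R ^ (2 * n) := by rw [pow_mul]; positivity
    calc ∫ ω in {ω | R < |ω|}, f ω ∂μ ≤ M * r ^ n / R ^ (2 * n) := by
          rw [le_div_iff₀' hpos]
          exact (mul_setIntegral_abs_gt_le_integral_pow_mul hf hfi hmi hR).trans hn
      _ = M * (r / R ^ 2) ^ n := by rw [pow_mul, div_pow, mul_div_assoc]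
  have hzero : f =ᵐ[μ.restrict {ω | R < |ω|}] 0 :=
    (setIntegral_eq_zero_iff_of_nonneg_ae (ae_restrict_of_ae hf) hfi.integrableOn).1
      (htail.antisymm (setIntegral_nonneg_of_ae_restrict (ae_restrict_of_ae hf)))
  exact (ae_restrict_iff' hS).1 hzero

theorem MeasureTheory.Integrable.exp_mul_abs_mul_of_ae_abs_gt {μ : Measure ℝ} {f : ℝ → ℝ}
    (hfi : Integrable f μ) {R : ℝ} (hsupp : ∀ᵐ ω ∂μ, R < |ω| → f ω = 0) (a : ℝ) :
    Integrable (fun ω ↦ exp (a * |ω|) * f ω) μ := by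
  refine (hfi.norm.const_mul (exp (|a| * R))).mono'
    ((by fun_prop : Continuous fun ω : ℝ ↦ exp (a * |ω|)).aestronglyMeasurable.mul
      hfi.aestronglyMeasurable) ?_
  filter_upwards [hsupp] with ω hω
  rcases lt_or_ge R |ω| with hRω | hωR
  · simp [hω hRω]
  · rw [norm_mul, norm_of_nonneg (exp_pos _).le]
    refine mul_le_mul_of_nonneg_right (exp_le_exp.2 ?_) (norm_nonneg _)
    calc a * |ω| ≤ |a| * |ω| := mul_le_mul_of_nonneg_right (le_abs_self a) (abs_nonneg ω)
      _ ≤ |a| * R := mul_le_mul_of_nonneg_left hωR (abs_nonneg a)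

theorem moment_bounds_imply_exp_decay_general (X : ℝ → ℂ) (C M : ℝ)
    (hint : ∀ k : ℕ, Even k → Integrable (fun ω : ℝ => ω ^ (2 * k) * (‖X ω‖) ^ 2))
    (hbd : ∀ k : ℕ, Even k → (∫ ω : ℝ, ω ^ (2 * k) * (‖X ω‖) ^ 2) ≤ C ^ k * M) :
    ∀ T : ℝ, 0 < T → 4 * T ^ 2 < 1 / C →
      Integrable (fun ω : ℝ => Real.exp (2 * T * |ω|) * (‖X ω‖) ^ 2) := by
  intro T _ _
  have hX : Integrable (fun ω : ℝ ↦ ‖X ω‖ ^ 2) := by simpa using hint 0 Even.zero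
  have hmom : ∃ᶠ k in atTop, Integrable (fun ω : ℝ ↦ ω ^ (2 * k) * ‖X ω‖ ^ 2) ∧
      ∫ ω, ω ^ (2 * k) * ‖X ω‖ ^ 2 ≤ M * C ^ k :=
    frequently_atTop.2 fun k ↦ ⟨2 * k, by omega,
      hint _ (even_two_mul k), (hbd _ (even_two_mul k)).trans_eq (mul_comm _ _)⟩
  have hCR : |C| < (|C| + 1) ^ 2 := by nlinarith [abs_nonneg C]
  exact hX.exp_mul_abs_mul_of_ae_abs_gt
    (ae_eq_zero_of_abs_gt_of_frequently_moment_le (ae_of_all _ fun _ ↦ sq_nonneg _) hX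
      (by positivity) hCR hmom) (2 * T)

theorem moment_bounds_imply_exp_decay (X : ℝ → ℂ) (C M : ℝ) (hC : 0 < C) (hM : 0 < M)
    (hmeas : Measurable X)
    (hint : ∀ k : ℕ, Even k → Integrable (fun ω : ℝ => ω ^ (2 * k) * (‖X ω‖) ^ 2))
    (hbd : ∀ k : ℕ, Even k → (∫ ω : ℝ, ω ^ (2 * k) * (‖X ω‖) ^ 2) ≤ C ^ k * M) :
    ∀ T : ℝ, 0 < T → 4 * T ^ 2 < 1 / C →
      Integrable (fun ω : ℝ => Real.exp (2 * T * |ω|) * (‖X ω‖) ^ 2) :=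
  moment_bounds_imply_exp_decay_general X C M hint hbd
end

section
/- Suppose X : ℝ → ℂ is measurable and there exist C, M > 0 such that ∫ (ω^{2k−2} + ω^{2k+2})/2 · |X(ω)|² dω ≤ k! C^{−k} M for all odd k ≥ 1. Then there exists T > 0 such that ∫ e^{2T|ω|} |X(ω)|² dω < ∞. -/
open MeasureTheory Real

/-!
Taking `k = 2n + 1` and dropping the term `ω ^ (2k + 2)`, the hypotheses bound the moments
`∫ ω ^ (4n) |X|²` by `2 (2n+1)! C^(-(2n+1)) M`. Against the Taylor coefficients
`(C/2) ^ (2n) / (2n)!` of `cosh ((C/2) ω²)` they sum to a multiple of `∑ (2n+1) 4⁻ⁿ`, so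
`cosh ((C/2) ω²) |X|²` is integrable. Young's inequality `2|ω| ≤ 2/C + (C/2) ω²` then gives
`exp (2|ω|) ≤ 2 exp (2/C) cosh ((C/2) ω²)`, so `T = 1` works.
-/

open scoped Nat

theorem cosh_factorial_term_eq {C : ℝ} (hC : C ≠ 0) (n : ℕ) :
    (C / 2) ^ (2 * n) / (2 * n)! * ((2 * n + 1)! * C⁻¹ ^ (2 * n + 1))
      = C⁻¹ * ((2 * n + 1) * (1 / 4) ^ n) := by
  have hquarter : (C / 2) ^ (2 * n) * C⁻¹ ^ (2 * n) = (1 / 4) ^ n := by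
    rw [← mul_pow, pow_mul, div_mul_eq_mul_div, mul_inv_cancel₀ hC]
    norm_num
  rw [Nat.factorial_succ, pow_succ, ← hquarter]
  push_cast
  field_simp

theorem summable_two_mul_add_one_mul_quarter_pow :
    Summable fun n : ℕ => (2 * n + 1 : ℝ) * (1 / 4) ^ n := by
  have hquarter : ‖(1 / 4 : ℝ)‖ < 1 := by norm_num
  simpa only [pow_one, add_mul, one_mul, mul_assoc] using
    ((summable_pow_mul_geometric_of_norm_lt_one 1 hquarter).mul_left 2).add
      (summable_geometric_of_norm_lt_one hquarter)

section
variable {α : Type*} [MeasurableSpace α] {μ : Measure α}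

theorem integrable_of_hasSum_of_nonneg {f : ℕ → α → ℝ} {F : α → ℝ}
    (hf : ∀ n, Integrable (f n) μ) (hf0 : ∀ n, 0 ≤ᵐ[μ] f n)
    (hF : ∀ᵐ a ∂μ, HasSum (fun n => f n a) (F a))
    (hsum : Summable fun n => ∫ a, f n a ∂μ) : Integrable F μ := by
  have hFm : AEStronglyMeasurable F μ :=
    aestronglyMeasurable_of_tendsto_ae Filter.atTop
      (fun n => Finset.aestronglyMeasurable_sum _ fun i _ => (hf i).1)
      (hF.mono fun a ha => by simpa only [Finset.sum_apply] using ha.tendsto_sum_nat)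
  have hF0 : 0 ≤ᵐ[μ] F := by
    filter_upwards [hF, ae_all_iff.2 hf0] with a ha ha0 using ha.nonneg ha0
  refine (lintegral_ofReal_ne_top_iff_integrable hFm hF0).1 ?_
  calc ∫⁻ a, ENNReal.ofReal (F a) ∂μ
      = ∫⁻ a, ∑' n, ENNReal.ofReal (f n a) ∂μ := by
        refine lintegral_congr_ae ?_
        filter_upwards [hF, ae_all_iff.2 hf0] with a ha ha0
        rw [← ha.tsum_eq, ENNReal.ofReal_tsum_of_nonneg ha0 ha.summable]
    _ = ∑' n, ENNReal.ofReal (∫ a, f n a ∂μ) := by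
        rw [lintegral_tsum fun n => (hf n).aemeasurable.ennreal_ofReal]
        exact tsum_congr fun n => (ofReal_integral_eq_lintegral_ofReal (hf n) (hf0 n)).symm
    _ ≠ ⊤ := by
        rw [← ENNReal.ofReal_tsum_of_nonneg (fun n => integral_nonneg_of_ae (hf0 n)) hsum]
        exact ENNReal.ofReal_ne_top

theorem integrable_cosh_mul_of_moment_le {f g : α → ℝ} (hg : 0 ≤ g) {C A : ℝ} (hC : 0 < C)
    (hmom : ∀ n : ℕ, Integrable (fun a => f a ^ (2 * n) * g a) μ ∧
      ∫ a, f a ^ (2 * n) * g a ∂μ ≤ (2 * n + 1)! * C⁻¹ ^ (2 * n + 1) * A) :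
    Integrable (fun a => cosh (C / 2 * f a) * g a) μ := by
  have hcoef (n : ℕ) : 0 ≤ (C / 2) ^ (2 * n) / (2 * n)! := by positivity
  have hterm (n : ℕ) (a : α) : 0 ≤ f a ^ (2 * n) * g a :=
    mul_nonneg ((even_two_mul n).pow_nonneg _) (hg a)
  refine integrable_of_hasSum_of_nonneg
    (f := fun n a => (C / 2) ^ (2 * n) / (2 * n)! * (f a ^ (2 * n) * g a))
    (fun n => (hmom n).1.const_mul _)
    (fun n => Filter.Eventually.of_forall fun a => mul_nonneg (hcoef n) (hterm n a))
    (Filter.Eventually.of_forall fun a => ?_) ?_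
  · simpa only [mul_pow, ← mul_assoc, mul_div_right_comm] using
      (hasSum_cosh (C / 2 * f a)).mul_right (g a)
  · refine ((summable_two_mul_add_one_mul_quarter_pow.mul_left C⁻¹).mul_right A).of_nonneg_of_le
      (fun n => integral_nonneg fun a => mul_nonneg (hcoef n) (hterm n a)) fun n => ?_
    rw [integral_const_mul, ← cosh_factorial_term_eq hC.ne', mul_assoc]
    exact mul_le_mul_of_nonneg_left ((hmom n).2.trans_eq (by ring)) (hcoef n)

end

theorem exp_two_mul_abs_le {s : ℝ} (hs : 0 < s) (t x : ℝ) :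
    exp (2 * t * |x|) ≤ 2 * exp (t ^ 2 / s) * cosh (s * x ^ 2) := by
  have hyoung : 2 * t * |x| ≤ t ^ 2 / s + s * x ^ 2 := by
    rw [div_add' _ _ _ hs.ne', le_div_iff₀ hs, ← sq_abs x]
    nlinarith [sq_nonneg (t - s * |x|)]
  calc exp (2 * t * |x|) ≤ exp (t ^ 2 / s + s * x ^ 2) := exp_le_exp.2 hyoung
    _ = exp (t ^ 2 / s) * exp (s * x ^ 2) := exp_add _ _
    _ ≤ exp (t ^ 2 / s) * (2 * cosh (s * x ^ 2)) := by
        gcongr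
        rw [cosh_eq]
        linarith [exp_pos (-(s * x ^ 2))]
    _ = 2 * exp (t ^ 2 / s) * cosh (s * x ^ 2) := by ring

theorem integrable_pow_mul_of_integrable_avg {μ : Measure ℝ} {g : ℝ → ℝ} (hg : Measurable g)
    (hg0 : 0 ≤ g) {a b : ℕ} (ha : Even a) (hb : Even b)
    (h : Integrable (fun x => (x ^ a + x ^ b) / 2 * g x) μ) :
    Integrable (fun x => x ^ a * g x) μ ∧
      ∫ x, x ^ a * g x ∂μ ≤ 2 * ∫ x, (x ^ a + x ^ b) / 2 * g x ∂μ := by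
  have hle (x : ℝ) : x ^ a * g x ≤ 2 * ((x ^ a + x ^ b) / 2 * g x) := by
    nlinarith [mul_nonneg (hb.pow_nonneg x) (hg0 x)]
  have hint : Integrable (fun x => x ^ a * g x) μ :=
    (h.const_mul 2).mono' (by fun_prop) (ae_of_all _ fun x => by
      rw [norm_of_nonneg (mul_nonneg (ha.pow_nonneg x) (hg0 x))]
      exact hle x)
  refine ⟨hint, ?_⟩
  rw [← integral_const_mul]
  exact integral_mono hint (h.const_mul 2) hle

theorem factorial_moment_bounds_imply_exp_decay_general (X : ℝ → ℂ) (C M : ℝ) (hC : 0 < C)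
    (hmeas : Measurable X)
    (hint : ∀ k : ℕ, Odd k → Integrable
      (fun ω : ℝ => (ω ^ (2 * k - 2) + ω ^ (2 * k + 2)) / 2 * ‖X ω‖ ^ 2))
    (hbd : ∀ k : ℕ, Odd k →
      (∫ ω : ℝ, (ω ^ (2 * k - 2) + ω ^ (2 * k + 2)) / 2 * ‖X ω‖ ^ 2)
        ≤ (k.factorial : ℝ) * C⁻¹ ^ k * M) :
    ∃ T : ℝ, 0 < T ∧
      Integrable (fun ω : ℝ => Real.exp (2 * T * |ω|) * ‖X ω‖ ^ 2) := by
  have hg : Measurable fun ω => ‖X ω‖ ^ 2 := by fun_prop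
  have hg0 : 0 ≤ fun ω => ‖X ω‖ ^ 2 := fun ω => sq_nonneg _
  have hmom (n : ℕ) : Integrable (fun ω : ℝ => (ω ^ 2) ^ (2 * n) * ‖X ω‖ ^ 2) ∧
      ∫ ω, (ω ^ 2) ^ (2 * n) * ‖X ω‖ ^ 2 ≤ (2 * n + 1)! * C⁻¹ ^ (2 * n + 1) * (2 * M) := by
    have hk : Odd (2 * n + 1) := odd_two_mul_add_one n
    have hlow : 2 * (2 * n + 1) - 2 = 2 * (2 * n) := by omega
    have hhigh : 2 * (2 * n + 1) + 2 = 2 * (2 * n + 2) := by omega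
    have hi := hint _ hk
    have hb := hbd _ hk
    rw [hlow, hhigh] at hi hb
    obtain ⟨hint_pow, hle⟩ := integrable_pow_mul_of_integrable_avg hg hg0 (even_two_mul _)
      (even_two_mul _) hi
    simp only [← pow_mul]
    exact ⟨hint_pow, by linarith⟩
  refine ⟨1, one_pos, ((integrable_cosh_mul_of_moment_le hg0 hC hmom).const_mul
    (2 * exp (1 ^ 2 / (C / 2)))).mono' (by fun_prop) (ae_of_all _ fun ω => ?_)⟩
  rw [norm_of_nonneg (by positivity), ← mul_assoc]
  exact mul_le_mul_of_nonneg_right (exp_two_mul_abs_le (half_pos hC) 1 ω) (hg0 ω)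

theorem factorial_moment_bounds_imply_exp_decay (X : ℝ → ℂ) (C M : ℝ) (hC : 0 < C) (hM : 0 < M)
    (hmeas : Measurable X)
    (hint : ∀ k : ℕ, Odd k → Integrable
      (fun ω : ℝ => (ω ^ (2 * k - 2) + ω ^ (2 * k + 2)) / 2 * ‖X ω‖ ^ 2))
    (hbd : ∀ k : ℕ, Odd k →
      (∫ ω : ℝ, (ω ^ (2 * k - 2) + ω ^ (2 * k + 2)) / 2 * ‖X ω‖ ^ 2)
        ≤ (k.factorial : ℝ) * C⁻¹ ^ k * M) :
    ∃ T : ℝ, 0 < T ∧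
      Integrable (fun ω : ℝ => Real.exp (2 * T * |ω|) * ‖X ω‖ ^ 2) :=
  factorial_moment_bounds_imply_exp_decay_general X C M hC hmeas hint hbd
end
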